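/- arXiv:1505.04854 — 5 statements merged into one kernel-verified Lean document; each statement's English description precedes it below -/
import Mathlib

section
/- A finite simple graph G admits a weak integer additive set-indexer with no mono-indexed edges if and only if G is bipartite; consequently, the sparing number of every finite bipartite graph is 0. -/
open Finset Pointwise

namespace IASIPaper

variable {V : Type*}

/-- The induced edge labeling: `f⁺(uv) = f(u) + f(v)` (sumset). -/
def edgeLabel (f : V → Finset ℕ) : Sym2 V → Finset ℕ :=
  Sym2.lift ⟨fun u v => f u + f v, fun u v => add_comm (f u) (f v)⟩

/-- An integer additive set-indexer of a simple graph `G`. -/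
def IsIASI (G : SimpleGraph V) (f : V → Finset ℕ) : Prop :=
  (∀ v, (f v).Nonempty) ∧ Function.Injective f ∧
    Set.InjOn (edgeLabel f) G.edgeSet

/-- A weak integer additive set-indexer. -/
def IsWeakIASI (G : SimpleGraph V) (f : V → Finset ℕ) : Prop :=
  IsIASI G f ∧ ∀ ⦃u v : V⦄, G.Adj u v → (f u + f v).card = max (f u).card (f v).card

/-- The number of mono-indexed edges of `G` under `f`. -/
noncomputable def monoEdgeCount (G : SimpleGraph V) (f : V → Finset ℕ) : ℕ :=
  {e | e ∈ G.edgeSet ∧ (edgeLabel f e).card = 1}.ncard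

/-- The number of mono-indexed vertices under `f`. -/
noncomputable def monoVertexCount (f : V → Finset ℕ) : ℕ :=
  {v | (f v).card = 1}.ncard

/-- The sparing number of `G`. -/
noncomputable def sparingNumber (G : SimpleGraph V) : ℕ :=
  sInf { k | ∃ f, IsWeakIASI G f ∧ monoEdgeCount G f = k }

/-- The minimum number of mono-indexed vertices among weak IASIs of `G`
attaining exactly `sparingNumber G` mono-indexed edges. -/
noncomputable def minMonoVertices (G : SimpleGraph V) : ℕ :=
  sInf { k | ∃ f, IsWeakIASI G f ∧ monoEdgeCount G f = sparingNumber G ∧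
    monoVertexCount f = k }

/-- The edge corona `G₁ ⋄ G₂`: take one copy of `G₂` for every edge of `G₁`
and join both end vertices of that edge to every vertex of the copy. -/
def edgeCorona {V₁ V₂ : Type*} (G₁ : SimpleGraph V₁) (G₂ : SimpleGraph V₂) :
    SimpleGraph (V₁ ⊕ (G₁.edgeSet × V₂)) where
  Adj a b :=
    match a, b with
    | Sum.inl u, Sum.inl v => G₁.Adj u v
    | Sum.inl u, Sum.inr ex => u ∈ (ex.1 : Sym2 V₁)
    | Sum.inr ex, Sum.inl v => v ∈ (ex.1 : Sym2 V₁)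
    | Sum.inr ex, Sum.inr ey => ex.1 = ey.1 ∧ G₂.Adj ex.2 ey.2
  symm := by
    constructor
    rintro (u | ⟨e, x⟩) (v | ⟨e', y⟩) h
    · exact h.symm
    · exact h
    · exact h
    · exact ⟨h.1.symm, h.2.symm⟩
  loopless := by
    constructor
    rintro (u | ⟨e, x⟩) h
    · exact G₁.irrefl h
    · exact G₂.irrefl h.2



lemma aux_pair_card (a : ℕ) : ({a, a+1} : Finset ℕ).card = 2 := by simp

lemma aux_pair_inj {a b : ℕ} (h : ({a, a+1} : Finset ℕ) = {b, b+1}) : a = b := by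
  have h1 : a ∈ ({b, b+1} : Finset ℕ) := h ▸ Finset.mem_insert_self a {a+1}
  have h2 : b ∈ ({a, a+1} : Finset ℕ) := h.symm ▸ Finset.mem_insert_self b {b+1}
  simp only [Finset.mem_insert, Finset.mem_singleton] at h1 h2
  omega

lemma aux_decode {M a b r s : ℕ} (hr : r < M) (hs : s < M)
    (h : M*a + r = M*b + s) : a = b ∧ r = s := by
  have hM : 0 < M := by omega
  have ha : (M*a + r) / M = a := by
    rw [Nat.mul_add_div hM, Nat.div_eq_of_lt hr]; omega
  have hb : (M*b + s) / M = b := by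
    rw [Nat.mul_add_div hM, Nat.div_eq_of_lt hs]; omega
  have hab : a = b := by rw [← ha, ← hb, h]
  subst hab
  exact ⟨rfl, by omega⟩

lemma aux_singleton_add_pair (a b : ℕ) :
    ({a} : Finset ℕ) + {b, b+1} = {a+b, a+b+1} := by
  ext x
  simp [Finset.mem_add]
  omega

lemma aux_card_le {A B : Finset ℕ} (hA : 2 ≤ A.card) (hB : B.Nonempty) :
    B.card + 1 ≤ (A + B).card := by
  have hA' : A.Nonempty := Finset.card_pos.mp (by omega)
  have hmM : A.min' hA' < A.max' hA' := A.min'_lt_max'_of_card (by omega)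
  have hnot : A.max' hA' + B.max' hB ∉ B.image (A.min' hA' + ·) := by
    simp only [Finset.mem_image]
    rintro ⟨b, hb, hbe⟩
    have := B.le_max' b hb
    omega
  have hsub : insert (A.max' hA' + B.max' hB) (B.image (A.min' hA' + ·)) ⊆ A + B := by
    intro x hx
    rcases Finset.mem_insert.mp hx with h | h
    · exact h ▸ Finset.add_mem_add (A.max'_mem hA') (B.max'_mem hB)
    · obtain ⟨b, hb, rfl⟩ := Finset.mem_image.mp h
      exact Finset.add_mem_add (A.min'_mem hA') hb
  calc B.card + 1
      = (insert (A.max' hA' + B.max' hB) (B.image (A.min' hA' + ·))).card := by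
        rw [Finset.card_insert_of_notMem hnot,
          Finset.card_image_of_injective _ (add_right_injective _)]
    _ ≤ (A + B).card := Finset.card_le_card hsub

lemma aux_card_lt {A B : Finset ℕ} (hA : 2 ≤ A.card) (hB : 2 ≤ B.card) :
    max A.card B.card < (A + B).card := by
  have hA' : A.Nonempty := Finset.card_pos.mp (by omega)
  have hB' : B.Nonempty := Finset.card_pos.mp (by omega)
  have h1 := aux_card_le hA hB'
  have h2 := aux_card_le hB hA'
  rw [add_comm B A] at h2
  exact max_lt (by omega) (by omega)

lemma aux_edgeLabel_mk (f : V → Finset ℕ) (u v : V) :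
    edgeLabel f s(u, v) = f u + f v := rfl

lemma aux_converse [Fintype V] {G : SimpleGraph V} {f : V → Finset ℕ}
    (hf : IsWeakIASI G f) (h0 : monoEdgeCount G f = 0) : G.Colorable 2 := by
  obtain ⟨⟨hne, hinj, hlab⟩, hweak⟩ := hf
  have hempty : {e | e ∈ G.edgeSet ∧ (edgeLabel f e).card = 1} = ∅ :=
    (Set.ncard_eq_zero (Set.toFinite _)).mp h0
  have key : ∀ u v, G.Adj u v → ((f u).card = 1 ↔ ¬ (f v).card = 1) := by
    intro u v huv
    have hcard : (f u + f v).card ≠ 1 := by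
      intro h
      have hmem : s(u,v) ∈ {e | e ∈ G.edgeSet ∧ (edgeLabel f e).card = 1} :=
        ⟨huv, by rw [aux_edgeLabel_mk]; exact h⟩
      rw [hempty] at hmem
      exact hmem
    have hw := hweak huv
    have hu1 : 1 ≤ (f u).card := Finset.card_pos.mpr (hne u)
    have hv1 : 1 ≤ (f v).card := Finset.card_pos.mpr (hne v)
    constructor
    · intro h1 h2
      rw [hw, h1, h2] at hcard
      simp at hcard
    · intro h2
      by_contra h1
      have := aux_card_lt (A := f u) (B := f v) (by omega) (by omega)
      omega
  refine ⟨SimpleGraph.Coloring.mk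
    (fun v => if (f v).card = 1 then (0 : Fin 2) else 1) ?_⟩
  intro u v huv heq
  have := key u v huv
  by_cases h : (f u).card = 1
  · have hv : ¬ (f v).card = 1 := this.mp h
    simp [h, hv] at heq
  · have hv : (f v).card = 1 := by
      by_contra hv'
      exact h (this.mpr hv')
    simp [h, hv] at heq

lemma aux_forward [Fintype V] {G : SimpleGraph V} (h : G.Colorable 2) :
    ∃ f : V → Finset ℕ, IsWeakIASI G f ∧ monoEdgeCount G f = 0 := by
  obtain ⟨C⟩ := h
  classical
  set n := Fintype.card V with hn
  set ι : V → ℕ := fun v => ((Fintype.equivFin V) v : ℕ) with hι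
  have hιinj : Function.Injective ι := by
    intro u v h
    exact (Fintype.equivFin V).injective (Fin.ext h)
  have hιlt : ∀ v, ι v < n := fun v => ((Fintype.equivFin V) v).isLt
  set M : ℕ := 2 * n + 2 with hM
  have hM0 : 0 < M := by omega
  set f : V → Finset ℕ :=
    fun v => if C v = 0 then {M * ι v} else {2 * ι v, 2 * ι v + 1} with hf
  have two : ∀ x : Fin 2, x = 0 ∨ x = 1 := by decide
  have opp : ∀ u v, G.Adj u v → ¬ C u = 0 → C v = 0 := by
    intro u v huv hu
    rcases two (C v) with h0 | h1
    · exact h0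
    · rcases two (C u) with h0 | h1'
      · exact absurd h0 hu
      · exact absurd (h1'.trans h1.symm) (C.valid huv)
  have hlabel : ∀ x y : V, C x = 0 → ¬ C y = 0 →
      f x + f y = {M * ι x + 2 * ι y, M * ι x + 2 * ι y + 1} := by
    intro x y hx hy
    rw [hf]
    simp only [hx, hy, if_true, if_false, if_pos, if_neg]
    exact aux_singleton_add_pair _ _
  have hcard2 : ∀ u v, G.Adj u v → (f u + f v).card = 2 := by
    intro u v huv
    by_cases hu : C u = 0
    · have hv : ¬ C v = 0 := fun hv => C.valid huv (hu.trans hv.symm)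
      rw [hlabel u v hu hv]
      exact aux_pair_card _
    · have hv : C v = 0 := opp u v huv hu
      rw [add_comm, hlabel v u hv hu]
      exact aux_pair_card _
  have hfcards : ∀ v, (f v).card = if C v = 0 then 1 else 2 := by
    intro v
    rw [hf]
    by_cases hv : C v = 0
    · simp [hv]
    · simp only [hv, if_false, if_neg]
      exact aux_pair_card _
  have form : ∀ u v : V, G.Adj u v → ∃ x y : V,
      s(u,v) = s(x,y) ∧ C x = 0 ∧ ¬ C y = 0 := by
    intro u v huv
    by_cases hu : C u = 0
    · exact ⟨u, v, rfl, hu, fun hv => C.valid huv (hu.trans hv.symm)⟩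
    · exact ⟨v, u, Sym2.eq_swap, opp u v huv hu, hu⟩
  have hfinj : Function.Injective f := by
    intro u v huv
    by_cases hu : C u = 0 <;> by_cases hv : C v = 0
    · rw [hf] at huv
      simp only [hu, hv, if_true] at huv
      have hm : M * ι u = M * ι v :=
        Finset.mem_singleton.mp (huv ▸ Finset.mem_singleton_self (M * ι u))
      exact hιinj (Nat.eq_of_mul_eq_mul_left hM0 hm)
    · have := congrArg Finset.card huv
      rw [hfcards u, hfcards v] at this
      simp [hu, hv] at this
    · have := congrArg Finset.card huv
      rw [hfcards u, hfcards v] at this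
      simp [hu, hv] at this
    · rw [hf] at huv
      simp only [hu, hv, if_false, if_neg] at huv
      have := aux_pair_inj huv
      exact hιinj (by omega)
  refine ⟨f, ⟨⟨?_, hfinj, ?_⟩, ?_⟩, ?_⟩
  · intro v
    rw [hf]
    by_cases hv : C v = 0 <;> simp [hv]
  · intro e1 he1 e2 he2 hl
    induction e1 using Sym2.ind with
    | _ u v =>
    induction e2 using Sym2.ind with
    | _ w z =>
    rw [SimpleGraph.mem_edgeSet] at he1 he2
    obtain ⟨x, y, hxy, hx0, hy0⟩ := form u v he1
    obtain ⟨x', y', hxy', hx0', hy0'⟩ := form w z he2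
    rw [hxy, hxy'] at hl ⊢
    rw [aux_edgeLabel_mk, aux_edgeLabel_mk, hlabel x y hx0 hy0,
      hlabel x' y' hx0' hy0'] at hl
    have heq := aux_pair_inj hl
    have h1 := hιlt y
    have h2 := hιlt y'
    obtain ⟨ha, hb⟩ := aux_decode (M := M) (by omega) (by omega) heq
    have hx : x = x' := hιinj ha
    have hy : y = y' := hιinj (by omega)
    rw [hx, hy]
  · intro u v huv
    rw [hcard2 u v huv, hfcards u, hfcards v]
    by_cases hu : C u = 0
    · have hv : ¬ C v = 0 := fun hv => C.valid huv (hu.trans hv.symm)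
      simp [hu, hv]
    · have hv : C v = 0 := opp u v huv hu
      simp [hu, hv]
  · rw [monoEdgeCount, Set.ncard_eq_zero (Set.toFinite _),
      Set.eq_empty_iff_forall_notMem]
    intro e
    induction e using Sym2.ind with
    | _ u v =>
    rintro ⟨he, hc⟩
    rw [SimpleGraph.mem_edgeSet] at he
    rw [aux_edgeLabel_mk, hcard2 u v he] at hc
    exact absurd hc (by omega)

/-- A finite simple graph admits a weak IASI with no mono-indexed edges
iff it is bipartite; consequently the sparing number of every finite bipartite graph is 0. -/
theorem weakIASI_no_mono_iff_bipartite {V : Type*} [Fintype V] (G : SimpleGraph V) :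
    ((∃ f : V → Finset ℕ, IsWeakIASI G f ∧ monoEdgeCount G f = 0) ↔ G.Colorable 2) ∧
    (G.Colorable 2 → sparingNumber G = 0) := by
  constructor
  · constructor
    · rintro ⟨f, hf, h0⟩
      exact aux_converse hf h0
    · exact aux_forward
  · intro h
    obtain ⟨f, hf, h0⟩ := aux_forward h
    exact Nat.sInf_eq_zero.mpr (Or.inl ⟨f, hf, h0⟩)

end IASIPaper
end

section
/- Let n ≥ 3 and let f be any weak integer additive set-indexer of the cycle Cₙ on n vertices. If n is odd, then the number of mono-indexed edges of Cₙ under f is odd (in particular at least one); if n is even, then the number of mono-indexed edges of Cₙ under f is even. -/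
open Finset Pointwise

namespace IASIPaper

variable {V : Type*}

/-- Under any weak IASI of the cycle `Cₙ` (`n ≥ 3`), the number of
mono-indexed edges is odd when `n` is odd and even when `n` is even. -/
theorem cycle_monoEdgeCount_parity (n : ℕ) (hn : 3 ≤ n)
    (f : Fin n → Finset ℕ) (hf : IsWeakIASI (SimpleGraph.cycleGraph n) f) :
    (Odd n → Odd (monoEdgeCount (SimpleGraph.cycleGraph n) f)) ∧
    (Even n → Even (monoEdgeCount (SimpleGraph.cycleGraph n) f)) := by
  haveI : NeZero n := ⟨by omega⟩
  have hne : ∀ v, (f v).Nonempty := hf.1.1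
  have hone : ∀ v, 1 ≤ (f v).card := fun v => Finset.card_pos.mpr (hne v)
  have hone_val : ((1 : Fin n)).val = 1 := by
    rcases n with _|_|m
    · omega
    · omega
    · rfl
  have hadj : ∀ i : Fin n, (SimpleGraph.cycleGraph n).Adj i (i + 1) := by
    intro i
    rw [SimpleGraph.cycleGraph_adj']
    right
    rw [add_sub_cancel_left, hone_val]
  have htwo : (1 + 1 : Fin n) ≠ 0 := by
    intro h
    have h2 := congrArg Fin.val h
    rw [Fin.val_add, hone_val, Fin.val_zero] at h2
    rw [Nat.mod_eq_of_lt (show 1 + 1 < n by omega)] at h2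
    omega
  have hnotboth : ∀ ⦃u v : Fin n⦄, (SimpleGraph.cycleGraph n).Adj u v →
      (f u).card = 1 ∨ (f v).card = 1 := by
    intro u v h
    by_contra hc
    push_neg at hc
    have h2u : 2 ≤ (f u).card := by have := hone u; omega
    have h2v : 2 ≤ (f v).card := by have := hone v; omega
    have hcd := cauchy_davenport_add_of_linearOrder_isCancelAdd (hne u) (hne v)
    have := hf.2 h
    omega
  have hmono : ∀ i : Fin n, ((edgeLabel f s(i, i + 1)).card = 1 ↔
      (f i).card = 1 ∧ (f (i + 1)).card = 1) := by
    intro i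
    have hw := hf.2 (hadj i)
    have hel : edgeLabel f s(i, i + 1) = f i + f (i + 1) := rfl
    rw [hel, hw]
    have := hone i; have := hone (i + 1)
    omega
  set e : Fin n → Sym2 (Fin n) := fun i => s(i, i + 1) with he
  have hinj : Function.Injective e := by
    intro i j hij
    simp only [he, Sym2.eq_iff] at hij
    rcases hij with ⟨h1, _⟩ | ⟨h1, h2⟩
    · exact h1
    · exfalso
      have h3 : i = i + (1 + 1) := by
        calc i = j + 1 := h1
        _ = (i + 1) + 1 := by rw [h2]
        _ = i + (1 + 1) := by abel
      exact htwo (left_eq_add.mp h3)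
  have hedge : ∀ x : Sym2 (Fin n),
      x ∈ (SimpleGraph.cycleGraph n).edgeSet ↔ ∃ i, e i = x := by
    intro x
    induction x with
    | _ u v =>
      rw [SimpleGraph.mem_edgeSet]
      constructor
      · intro h
        rw [SimpleGraph.cycleGraph_adj'] at h
        rcases h with h | h
        · refine ⟨v, ?_⟩
          have h1 : u - v = 1 := by apply Fin.ext; rw [h, hone_val]
          have h2 : v + 1 = u := by rw [← h1]; abel
          simp only [he, h2]
          exact Sym2.eq_swap
        · refine ⟨u, ?_⟩
          have h1 : v - u = 1 := by apply Fin.ext; rw [h, hone_val]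
          have h2 : u + 1 = v := by rw [← h1]; abel
          simp only [he, h2]
      · rintro ⟨i, hi⟩
        simp only [he, Sym2.eq_iff] at hi
        rcases hi with ⟨h1, h2⟩ | ⟨h1, h2⟩
        · rw [← h1, ← h2]; exact hadj i
        · rw [← h1, ← h2]; exact (hadj i).symm
  classical
  set p : Fin n → Prop := fun i => (f i).card = 1 ∧ (f (i + 1)).card = 1 with hp
  -- the mono edge set is the image of T under e
  have hsetEq : {x | x ∈ (SimpleGraph.cycleGraph n).edgeSet ∧ (edgeLabel f x).card = 1}
      = e '' {i | p i} := by
    ext x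
    simp only [Set.mem_setOf_eq, Set.mem_image]
    constructor
    · rintro ⟨hx, hcard⟩
      obtain ⟨i, hi⟩ := (hedge x).mp hx
      refine ⟨i, ?_, hi⟩
      rw [← hi] at hcard
      exact (hmono i).mp hcard
    · rintro ⟨i, hpi, hi⟩
      refine ⟨(hedge x).mpr ⟨i, hi⟩, ?_⟩
      rw [← hi]
      exact (hmono i).mpr hpi
  have hcount : monoEdgeCount (SimpleGraph.cycleGraph n) f
      = (univ.filter p).card := by
    rw [monoEdgeCount, hsetEq, Set.ncard_image_of_injective _ hinj]
    rw [← Set.ncard_coe_finset]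
    congr 1
    ext i
    simp [hp]
  set k := (univ.filter (fun i : Fin n => ¬ (f i).card = 1)).card with hk
  have hshift : (univ.filter (fun i : Fin n => ¬ (f (i + 1)).card = 1)).card = k := by
    rw [hk]
    apply Finset.card_nbij' (i := fun i => i + 1) (j := fun i => i - 1)
    · intro a ha
      simp only [mem_coe, Finset.mem_filter, Finset.mem_univ, true_and] at ha ⊢
      exact ha
    · intro a ha
      simp only [mem_coe, Finset.mem_filter, Finset.mem_univ, true_and] at ha ⊢
      rw [sub_add_cancel]
      exact ha
    · intro a _
      simp only [add_sub_cancel_right]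
    · intro a _
      simp only [sub_add_cancel]
  have hdisj : Disjoint (univ.filter (fun i : Fin n => ¬ (f i).card = 1))
      (univ.filter (fun i : Fin n => ¬ (f (i + 1)).card = 1)) := by
    rw [Finset.disjoint_left]
    intro a ha hb
    simp only [Finset.mem_filter, Finset.mem_univ, true_and] at ha hb
    rcases hnotboth (hadj a) with h | h
    · exact ha h
    · exact hb h
  have hsplit : (univ.filter p).card + (univ.filter (fun i => ¬ p i)).card = n := by
    rw [Finset.card_filter_add_card_filter_not, Finset.card_univ, Fintype.card_fin]
  have hunion : (univ.filter (fun i => ¬ p i)).card = k + k := by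
    have heq : univ.filter (fun i => ¬ p i)
        = univ.filter (fun i : Fin n => ¬ (f i).card = 1)
          ∪ univ.filter (fun i : Fin n => ¬ (f (i + 1)).card = 1) := by
      ext i
      simp only [Finset.mem_filter, Finset.mem_univ, true_and, Finset.mem_union, hp, not_and_or]
    rw [heq, Finset.card_union_of_disjoint hdisj, hshift]
  have hfinal : monoEdgeCount (SimpleGraph.cycleGraph n) f + 2 * k = n := by
    rw [hcount]; omega
  constructor
  · intro hodd
    rw [Nat.odd_iff] at hodd ⊢
    omega
  · intro heven
    rw [Nat.even_iff] at heven ⊢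
    omega

end IASIPaper
end

section
/- Under any weak integer additive set-indexer of the complete graph Kₙ, at most one vertex has a non-singleton set-label. Consequently, the sparing number of Kₙ is φ(Kₙ) = (n−1)(n−2)/2. -/
open Finset Pointwise

namespace IASIPaper

variable {V : Type*}

section Aux

lemma pairAdd (c : ℕ) : ({1,2} : Finset ℕ) + {c} = {1+c, 2+c} := by
  ext x; simp [Finset.mem_add, eq_comm]

lemma pairAdd_card (c : ℕ) : (({1,2} : Finset ℕ) + {c}).card = 2 := by
  rw [pairAdd, Finset.card_insert_of_notMem (by simp), Finset.card_singleton]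

lemma two_pow_lt_pair {x y x' y' : ℕ} (hxy : x < y) (hyy' : y < y') :
    2^x + 2^y < 2^x' + 2^y' := by
  have h1 : 2^x < 2^y := Nat.pow_lt_pow_right one_lt_two hxy
  have h2 : 2^y + 2^y ≤ 2^y' := by
    rw [← two_mul, ← pow_succ']
    exact Nat.pow_le_pow_right (by norm_num) hyy'
  have h3 : 0 < 2^x' := Nat.pow_pos (by norm_num)
  omega

lemma two_pow_pair_inj_ord {u v u' v' : ℕ} (h1 : u < v) (h2 : u' < v')
    (h : 2^u + 2^v = 2^u' + 2^v') : u = u' ∧ v = v' := by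
  have hv : v = v' := by
    rcases lt_trichotomy v v' with hlt | heq | hgt
    · exact absurd h (Nat.ne_of_lt (two_pow_lt_pair h1 hlt))
    · exact heq
    · exact absurd h.symm (Nat.ne_of_lt (two_pow_lt_pair h2 hgt))
  subst hv
  have hu : (2:ℕ)^u = 2^u' := by omega
  exact ⟨Nat.pow_right_injective (le_refl 2) hu, rfl⟩

lemma two_pow_add_inj {a b c d : ℕ} (hab : a ≠ b) (hcd : c ≠ d)
    (h : 2^a + 2^b = 2^c + 2^d) : (a = c ∧ b = d) ∨ (a = d ∧ b = c) := by
  rcases hab.lt_or_gt with h1 | h1 <;> rcases hcd.lt_or_gt with h2 | h2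
  · exact Or.inl (two_pow_pair_inj_ord h1 h2 h)
  · exact Or.inr (two_pow_pair_inj_ord h1 h2 (by omega))
  · exact Or.inr (by have := two_pow_pair_inj_ord h1 h2 (by omega); tauto)
  · exact Or.inl (by have := two_pow_pair_inj_ord h1 h2 (by omega); tauto)

lemma even_two_pow {k : ℕ} (hk : k ≠ 0) : Even (2^k) :=
  (Nat.even_pow).mpr ⟨even_two, hk⟩

/-- The construction: label the vertex with value `0` by `{1,2}`, all others by `{2^v}`. -/
def g (n : ℕ) : Fin n → Finset ℕ := fun v => if (v : ℕ) = 0 then {1,2} else {2^(v : ℕ)}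

lemma g_card_eq_one {n : ℕ} {v : Fin n} (hv : (v : ℕ) ≠ 0) : (g n v).card = 1 := by
  simp [g, hv]

lemma g_add_of_ne {n : ℕ} {a b : Fin n} (ha : (a : ℕ) ≠ 0) (hb : (b : ℕ) ≠ 0) :
    g n a + g n b = {2^(a:ℕ) + 2^(b:ℕ)} := by
  simp only [g, if_neg ha, if_neg hb, Finset.singleton_add_singleton]

lemma g_add_of_zero {n : ℕ} {a b : Fin n} (ha : (a : ℕ) = 0) (hb : (b : ℕ) ≠ 0) :
    g n a + g n b = {1 + 2^(b:ℕ), 2 + 2^(b:ℕ)} := by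
  simp only [g, if_pos ha, if_neg hb]; exact pairAdd _

lemma g_card_add {n : ℕ} {a b : Fin n} (hab : a ≠ b) :
    (g n a + g n b).card = if (a : ℕ) = 0 ∨ (b : ℕ) = 0 then 2 else 1 := by
  have hvab : (a : ℕ) ≠ (b : ℕ) := fun h => hab (Fin.ext h)
  by_cases ha : (a : ℕ) = 0
  · have hb : (b : ℕ) ≠ 0 := by omega
    rw [g_add_of_zero ha hb, if_pos (Or.inl ha),
      Finset.card_insert_of_notMem (by simp), Finset.card_singleton]
  · by_cases hb : (b : ℕ) = 0
    · rw [add_comm (g n a), g_add_of_zero hb ha, if_pos (Or.inr hb),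
        Finset.card_insert_of_notMem (by simp), Finset.card_singleton]
    · rw [g_add_of_ne ha hb, if_neg (by tauto), Finset.card_singleton]

lemma g_pair_inj {n : ℕ} {b d : Fin n} (hb : (b : ℕ) ≠ 0) (hd : (d : ℕ) ≠ 0)
    (h : ({1 + 2^(b:ℕ), 2 + 2^(b:ℕ)} : Finset ℕ) = {1 + 2^(d:ℕ), 2 + 2^(d:ℕ)}) : b = d := by
  have h1 : 1 + 2^(b:ℕ) ∈ ({1 + 2^(d:ℕ), 2 + 2^(d:ℕ)} : Finset ℕ) := by
    rw [← h]; simp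
  simp only [Finset.mem_insert, Finset.mem_singleton] at h1
  obtain ⟨x, hx⟩ := even_two_pow hb
  obtain ⟨y, hy⟩ := even_two_pow hd
  have : (2:ℕ)^(b:ℕ) = 2^(d:ℕ) := by omega
  exact Fin.ext (Nat.pow_right_injective (le_refl 2) this)

lemma g_key {n : ℕ} {a b c d : Fin n} (hab : a ≠ b) (hcd : c ≠ d)
    (h : g n a + g n b = g n c + g n d) : s(a,b) = s(c,d) := by
  have hvab : (a : ℕ) ≠ (b : ℕ) := fun h' => hab (Fin.ext h')
  have hvcd : (c : ℕ) ≠ (d : ℕ) := fun h' => hcd (Fin.ext h')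
  have hcards : (if (a:ℕ) = 0 ∨ (b:ℕ) = 0 then 2 else 1) = (if (c:ℕ) = 0 ∨ (d:ℕ) = 0 then 2 else 1) := by
    rw [← g_card_add hab, ← g_card_add hcd, h]
  by_cases ha : (a : ℕ) = 0
  · have hb : (b : ℕ) ≠ 0 := by omega
    have hzcd : (c:ℕ) = 0 ∨ (d:ℕ) = 0 := by
      by_contra hcon; push_neg at hcon
      simp [ha, hcon.1, hcon.2] at hcards
    rcases hzcd with hc | hd
    · have hd : (d : ℕ) ≠ 0 := by omega
      rw [g_add_of_zero ha hb, g_add_of_zero hc hd] at h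
      have : b = d := g_pair_inj hb hd h
      have hac : a = c := Fin.ext (by omega)
      rw [this, hac]
    · have hc : (c : ℕ) ≠ 0 := by omega
      rw [g_add_of_zero ha hb, add_comm (g n c), g_add_of_zero hd hc] at h
      have : b = c := g_pair_inj hb hc h
      have had : a = d := Fin.ext (by omega)
      rw [this, had, Sym2.eq_swap]
  · by_cases hb : (b : ℕ) = 0
    · have hzcd : (c:ℕ) = 0 ∨ (d:ℕ) = 0 := by
        by_contra hcon; push_neg at hcon
        simp [ha, hb, hcon.1, hcon.2] at hcards
      rcases hzcd with hc | hd
      · have hd : (d : ℕ) ≠ 0 := by omega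
        rw [add_comm (g n a), g_add_of_zero hb ha, g_add_of_zero hc hd] at h
        have : a = d := g_pair_inj ha hd h
        have hbc : b = c := Fin.ext (by omega)
        rw [this, hbc, Sym2.eq_swap]
      · have hc : (c : ℕ) ≠ 0 := by omega
        rw [add_comm (g n a), g_add_of_zero hb ha, add_comm (g n c), g_add_of_zero hd hc] at h
        have : a = c := g_pair_inj ha hc h
        have hbd : b = d := Fin.ext (by omega)
        rw [this, hbd]
    · have hc : (c : ℕ) ≠ 0 ∧ (d : ℕ) ≠ 0 := by
        by_contra hcon
        have h0 : (c:ℕ) = 0 ∨ (d:ℕ) = 0 := by tauto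
        rw [if_neg (by tauto), if_pos h0] at hcards
        omega
      rw [g_add_of_ne ha hb, g_add_of_ne hc.1 hc.2] at h
      have := Finset.singleton_injective h
      rcases two_pow_add_inj hvab hvcd this with ⟨h1, h2⟩ | ⟨h1, h2⟩
      · rw [Fin.ext h1, Fin.ext h2]
      · rw [Fin.ext h1, Fin.ext h2, Sym2.eq_swap]

lemma edgeLabel_mk {V : Type*} (f : V → Finset ℕ) (a b : V) :
    edgeLabel f s(a,b) = f a + f b := rfl

lemma g_isWeakIASI (n : ℕ) : IsWeakIASI (⊤ : SimpleGraph (Fin n)) (g n) := by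
  refine ⟨⟨?_, ?_, ?_⟩, ?_⟩
  · intro v
    by_cases hv : (v : ℕ) = 0 <;> simp [g, hv]
  · intro a b h
    by_cases ha : (a : ℕ) = 0 <;> by_cases hb : (b : ℕ) = 0
    · exact Fin.ext (by omega)
    · exfalso; have := congrArg Finset.card h
      simp [g, ha, hb] at this
    · exfalso; have := congrArg Finset.card h
      simp [g, ha, hb] at this
    · simp only [g, if_neg ha, if_neg hb, Finset.singleton_injective.eq_iff] at h
      exact Fin.ext (Nat.pow_right_injective (le_refl 2) h)
  · have H : ∀ e1 e2 : Sym2 (Fin n), e1 ∈ (⊤ : SimpleGraph (Fin n)).edgeSet →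
        e2 ∈ (⊤ : SimpleGraph (Fin n)).edgeSet →
        edgeLabel (g n) e1 = edgeLabel (g n) e2 → e1 = e2 := by
      intro e1 e2
      refine Sym2.inductionOn₂ e1 e2 (fun a b c d => ?_)
      intro h1 h2 heq
      rw [SimpleGraph.mem_edgeSet, SimpleGraph.top_adj] at h1 h2
      exact g_key h1 h2 heq
    exact fun e1 h1 e2 h2 heq => H e1 e2 h1 h2 heq
  · intro a b hadj
    rw [SimpleGraph.top_adj] at hadj
    rw [g_card_add hadj]
    by_cases ha : (a : ℕ) = 0
    · have hb : (b : ℕ) ≠ 0 := fun h => hadj (Fin.ext (by omega))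
      simp [g, ha, hb]
    · by_cases hb : (b : ℕ) = 0
      · simp [g, ha, hb]
      · simp [g, ha, hb]

lemma arith (n : ℕ) : n.choose 2 - (n - 1) = (n - 1) * (n - 2) / 2 := by
  cases n with
  | zero => simp
  | succ m =>
    have h2 : m + 1 - 1 = m := by omega
    have h3 : m + 1 - 2 = m - 1 := by omega
    rw [Nat.choose_succ_succ, Nat.choose_one_right, h2, h3, Nat.add_sub_cancel_left,
      Nat.choose_two_right]

variable {n : ℕ}

/-- The mono edge set equals the complement of the incidence set of `w`, as long as
all vertices other than `w` are singleton-labeled and `f` is a weak IASI. -/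
lemma mono_superset (f : Fin n → Finset ℕ) (hf : IsWeakIASI (⊤ : SimpleGraph (Fin n)) f)
    (w : Fin n) (hw : ∀ v, v ≠ w → (f v).card = 1) :
    ↑((⊤ : SimpleGraph (Fin n)).edgeFinset \ (⊤ : SimpleGraph (Fin n)).incidenceFinset w) ⊆
      {e | e ∈ (⊤ : SimpleGraph (Fin n)).edgeSet ∧ (edgeLabel f e).card = 1} := by
  have H : ∀ e : Sym2 (Fin n),
      e ∈ ((⊤ : SimpleGraph (Fin n)).edgeFinset \ (⊤ : SimpleGraph (Fin n)).incidenceFinset w) →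
      e ∈ {e | e ∈ (⊤ : SimpleGraph (Fin n)).edgeSet ∧ (edgeLabel f e).card = 1} := by
    intro e
    refine Sym2.inductionOn e (fun a b => ?_)
    intro he
    rw [Finset.mem_sdiff, SimpleGraph.mem_edgeFinset, SimpleGraph.mem_incidenceFinset] at he
    obtain ⟨he1, he2⟩ := he
    have hadj : a ≠ b := by
      rw [SimpleGraph.mem_edgeSet, SimpleGraph.top_adj] at he1; exact he1
    have hwab : a ≠ w ∧ b ≠ w := by
      constructor <;> (rintro rfl; exact he2 ⟨he1, by simp [Sym2.mem_iff]⟩)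
    refine ⟨he1, ?_⟩
    rw [edgeLabel_mk, hf.2 (by simpa using hadj), hw a hwab.1, hw b hwab.2]
    exact max_self 1
  exact fun e he => H e he

lemma card_sdiff_incidence (hn : 0 < n) (w : Fin n) :
    ((⊤ : SimpleGraph (Fin n)).edgeFinset \ (⊤ : SimpleGraph (Fin n)).incidenceFinset w).card =
      (n - 1) * (n - 2) / 2 := by
  have hsub : (⊤ : SimpleGraph (Fin n)).incidenceFinset w ⊆ (⊤ : SimpleGraph (Fin n)).edgeFinset := by
    intro e he
    rw [SimpleGraph.mem_incidenceFinset] at he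
    rw [SimpleGraph.mem_edgeFinset]
    exact he.1
  rw [Finset.card_sdiff_of_subset hsub, SimpleGraph.card_incidenceFinset_eq_degree,
    SimpleGraph.complete_graph_degree, SimpleGraph.card_edgeFinset_top_eq_card_choose_two,
    Fintype.card_fin, arith]

lemma g_monoEdgeCount (n : ℕ) :
    monoEdgeCount (⊤ : SimpleGraph (Fin n)) (g n) = (n - 1) * (n - 2) / 2 := by
  rcases Nat.eq_zero_or_pos n with rfl | hn
  · have : {e : Sym2 (Fin 0) | e ∈ (⊤ : SimpleGraph (Fin 0)).edgeSet ∧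
        (edgeLabel (g 0) e).card = 1} = ∅ := Set.eq_empty_of_isEmpty _
    rw [monoEdgeCount, this, Set.ncard_empty]
  · set z : Fin n := ⟨0, hn⟩ with hz
    have hset : {e : Sym2 (Fin n) | e ∈ (⊤ : SimpleGraph (Fin n)).edgeSet ∧
        (edgeLabel (g n) e).card = 1} =
        ↑((⊤ : SimpleGraph (Fin n)).edgeFinset \ (⊤ : SimpleGraph (Fin n)).incidenceFinset z) := by
      have H : ∀ a b : Fin n, (s(a,b) ∈ (⊤ : SimpleGraph (Fin n)).edgeSet ∧
          (edgeLabel (g n) s(a,b)).card = 1) ↔ s(a,b) ∈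
          ((⊤ : SimpleGraph (Fin n)).edgeFinset \ (⊤ : SimpleGraph (Fin n)).incidenceFinset z) := by
        intro a b
        rw [Finset.mem_sdiff, SimpleGraph.mem_edgeFinset, SimpleGraph.mem_incidenceFinset]
        constructor
        · rintro ⟨h1, h2⟩
          have hadj : a ≠ b := by
            rw [SimpleGraph.mem_edgeSet, SimpleGraph.top_adj] at h1; exact h1
          refine ⟨h1, ?_⟩
          rintro ⟨-, hmem⟩
          rw [edgeLabel_mk, g_card_add hadj] at h2
          rw [Sym2.mem_iff] at hmem
          have : (a : ℕ) = 0 ∨ (b : ℕ) = 0 := by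
            rcases hmem with h | h <;> [left; right] <;> rw [← h]
          rw [if_pos this] at h2; omega
        · rintro ⟨h1, h2⟩
          have hadj : a ≠ b := by
            rw [SimpleGraph.mem_edgeSet, SimpleGraph.top_adj] at h1; exact h1
          refine ⟨h1, ?_⟩
          rw [edgeLabel_mk, g_card_add hadj, if_neg]
          rintro (h | h)
          · exact h2 ⟨h1, by rw [Sym2.mem_iff]; left; exact Fin.ext (by simp [h, hz])⟩
          · exact h2 ⟨h1, by rw [Sym2.mem_iff]; right; exact Fin.ext (by simp [h, hz])⟩
      ext e
      exact Sym2.inductionOn e H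
    rw [monoEdgeCount, hset, Set.ncard_coe_finset, card_sdiff_incidence hn]

end Aux

/-- Under any weak IASI of `Kₙ` at most one vertex has a non-singleton
set-label, and `φ(Kₙ) = (n−1)(n−2)/2`. -/
theorem completeGraph_weakIASI_and_sparing (n : ℕ) :
    (∀ f : Fin n → Finset ℕ, IsWeakIASI (⊤ : SimpleGraph (Fin n)) f →
      {v : Fin n | (f v).card ≠ 1}.Subsingleton) ∧
    sparingNumber (⊤ : SimpleGraph (Fin n)) = (n - 1) * (n - 2) / 2 := by
  have part1 : ∀ f : Fin n → Finset ℕ, IsWeakIASI (⊤ : SimpleGraph (Fin n)) f →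
      {v : Fin n | (f v).card ≠ 1}.Subsingleton := by
    intro f hf u hu v hv
    by_contra hne
    have hadj : (⊤ : SimpleGraph (Fin n)).Adj u v := by simpa using hne
    have hcd := cauchy_davenport_add_of_linearOrder_isCancelAdd (hf.1.1 u) (hf.1.1 v)
    have hmax := hf.2 hadj
    have hu1 : 1 ≤ (f u).card := Finset.card_pos.mpr (hf.1.1 u)
    have hv1 : 1 ≤ (f v).card := Finset.card_pos.mpr (hf.1.1 v)
    have hu2 : (f u).card ≠ 1 := hu
    have hv2 : (f v).card ≠ 1 := hv
    rw [hmax] at hcd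
    rcases max_cases (f u).card (f v).card with ⟨h, _⟩ | ⟨h, _⟩ <;> omega
  refine ⟨part1, ?_⟩
  have hmem : (n - 1) * (n - 2) / 2 ∈
      {k | ∃ f, IsWeakIASI (⊤ : SimpleGraph (Fin n)) f ∧
        monoEdgeCount (⊤ : SimpleGraph (Fin n)) f = k} :=
    ⟨g n, g_isWeakIASI n, g_monoEdgeCount n⟩
  refine le_antisymm (Nat.sInf_le hmem) (le_csInf ⟨_, hmem⟩ ?_)
  rintro k ⟨f, hf, rfl⟩
  rcases Nat.eq_zero_or_pos n with rfl | hn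
  · simp
  -- find a vertex `w` such that all other vertices are singleton-labeled
  obtain ⟨w, hw⟩ : ∃ w : Fin n, ∀ v, v ≠ w → (f v).card = 1 := by
    by_cases hns : ({v : Fin n | (f v).card ≠ 1}).Nonempty
    · obtain ⟨w, hwmem⟩ := hns
      exact ⟨w, fun v hv => by
        by_contra hc
        exact hv (part1 f hf hc hwmem)⟩
    · refine ⟨⟨0, hn⟩, fun v _ => ?_⟩
      by_contra hc
      exact hns ⟨v, hc⟩
  calc (n - 1) * (n - 2) / 2
      = ((⊤ : SimpleGraph (Fin n)).edgeFinset \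
          (⊤ : SimpleGraph (Fin n)).incidenceFinset w).card := (card_sdiff_incidence hn w).symm
    _ = (↑((⊤ : SimpleGraph (Fin n)).edgeFinset \
          (⊤ : SimpleGraph (Fin n)).incidenceFinset w) : Set (Sym2 (Fin n))).ncard :=
        (Set.ncard_coe_finset _).symm
    _ ≤ monoEdgeCount (⊤ : SimpleGraph (Fin n)) f :=
        Set.ncard_le_ncard (mono_superset f hf w hw) (Set.toFinite _)


end IASIPaper
end

section
/- Let G₁ and G₂ be finite simple graphs without isolated vertices, and let f be a weak integer additive set-indexer of the edge corona G₁ ⋄ G₂. Then for every edge e = uv of G₁ such that at least one of f(u), f(v) is a non-singleton set (i.e., e is not mono-indexed under f), every vertex of the copy of G₂ corresponding to e has a singleton set-label under f, so that this copy of G₂ is 1-uniform. In particular, either the restriction of f to G₁ is 1-uniform, or the copies of G₂ corresponding to all non-mono-indexed edges of G₁ are 1-uniform. -/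
open Finset Pointwise

namespace IASIPaper

variable {V : Type*}

/-- If `f` is a weak IASI of the edge corona `G₁ ⋄ G₂`, then for every edge
`uv` of `G₁` with at least one non-singleton end vertex label, every vertex of the
corresponding copy of `G₂` has a singleton set-label (so that copy is 1-uniform). -/
theorem edgeCorona_weakIASI_copies_uniform {V₁ V₂ : Type*} [Fintype V₁] [Fintype V₂]
    (G₁ : SimpleGraph V₁) (G₂ : SimpleGraph V₂)
    (h₁ : ∀ v : V₁, ∃ w, G₁.Adj v w) (h₂ : ∀ v : V₂, ∃ w, G₂.Adj v w)
    (f : V₁ ⊕ (G₁.edgeSet × V₂) → Finset ℕ)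
    (hf : IsWeakIASI (edgeCorona G₁ G₂) f) :
    ∀ (u v : V₁) (huv : G₁.Adj u v),
      ((f (Sum.inl u)).card ≠ 1 ∨ (f (Sum.inl v)).card ≠ 1) →
      (∀ x : V₂,
        (f (Sum.inr (⟨s(u, v), (SimpleGraph.mem_edgeSet G₁).mpr huv⟩, x))).card = 1) ∧
      (∀ x y : V₂, G₂.Adj x y →
        (f (Sum.inr (⟨s(u, v), (SimpleGraph.mem_edgeSet G₁).mpr huv⟩, x)) +
          f (Sum.inr (⟨s(u, v), (SimpleGraph.mem_edgeSet G₁).mpr huv⟩, y))).card = 1) := by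
  obtain ⟨⟨hne, _, _⟩, hweak⟩ := hf
  intro u v huv h
  set e : G₁.edgeSet := ⟨s(u, v), (SimpleGraph.mem_edgeSet G₁).mpr huv⟩ with he
  have key : ∀ x : V₂, (f (Sum.inr (e, x))).card = 1 := by
    intro x
    rcases h with h | h
    · have hadj : (edgeCorona G₁ G₂).Adj (Sum.inl u) (Sum.inr (e, x)) := by
        show u ∈ (e.1 : Sym2 V₁)
        rw [he]
        exact Sym2.mem_mk_left u v
      have hw := hweak hadj
      have hcd := cauchy_davenport_add_of_linearOrder_isCancelAdd
        (hne (Sum.inl u)) (hne (Sum.inr (e, x)))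
      have h1 := (hne (Sum.inl u)).card_pos
      have h2 := (hne (Sum.inr (e, x))).card_pos
      omega
    · have hadj : (edgeCorona G₁ G₂).Adj (Sum.inl v) (Sum.inr (e, x)) := by
        show v ∈ (e.1 : Sym2 V₁)
        rw [he]
        exact Sym2.mem_mk_right u v
      have hw := hweak hadj
      have hcd := cauchy_davenport_add_of_linearOrder_isCancelAdd
        (hne (Sum.inl v)) (hne (Sum.inr (e, x)))
      have h1 := (hne (Sum.inl v)).card_pos
      have h2 := (hne (Sum.inr (e, x))).card_pos
      omega
  refine ⟨key, ?_⟩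
  intro x y hxy
  have hadj : (edgeCorona G₁ G₂).Adj (Sum.inr (e, x)) (Sum.inr (e, y)) := ⟨rfl, hxy⟩
  rw [hweak hadj, key x, key y, max_self]

end IASIPaper
end

section
/- Let G₁ and G₂ be finite simple graphs without isolated vertices, let f₁ be a weak IASI of G₁ and f₂ a weak IASI of G₂. Then there exists a weak IASI f of the edge corona G₁ ⋄ G₂ such that: |f(v)| = |f₁(v)| for every vertex v of G₁; every copy of G₂ corresponding to an edge of G₁ that is not mono-indexed under f₁ is 1-uniform under f; and in every copy of G₂ corresponding to a mono-indexed edge of G₁, the label of each vertex u of that copy satisfies |f(u)| = |f₂(u')| where u' is the corresponding vertex of G₂. -/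
open Finset Pointwise

namespace IASIPaper

variable {V : Type*}

private lemma pow2_eq {x y : ℕ} (h : (2:ℕ)^x = 2^y) : x = y :=
  Nat.pow_right_injective (le_refl 2) h

private lemma two_pow_add_eq : ∀ a b c d : ℕ,
    2^a + 2^b = 2^c + 2^d → (a = c ∧ b = d) ∨ (a = d ∧ b = c) := by
  intro a
  induction a with
  | zero =>
    rintro (_ | b) (_ | c) (_ | d) h <;>
      simp only [pow_zero, pow_succ] at h
    · exact Or.inl ⟨rfl, rfl⟩
    · exfalso; have := @Nat.one_le_two_pow d; omega
    · exfalso; have := @Nat.one_le_two_pow c; omega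
    · exfalso
      have := @Nat.one_le_two_pow c; have := @Nat.one_le_two_pow d; omega
    · exfalso; have := @Nat.one_le_two_pow b; omega
    · have hbd : (2:ℕ)^b = 2^d := by omega
      exact Or.inl ⟨rfl, by rw [pow2_eq hbd]⟩
    · have hbc : (2:ℕ)^b = 2^c := by omega
      exact Or.inr ⟨rfl, by rw [pow2_eq hbc]⟩
    · exfalso
      have := @Nat.one_le_two_pow b; have := @Nat.one_le_two_pow c
      have := @Nat.one_le_two_pow d; omega
  | succ a IH =>
    rintro (_ | b) (_ | c) (_ | d) h <;>
      simp only [pow_zero, pow_succ] at h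
    · exfalso; have := @Nat.one_le_two_pow a; omega
    · have had : (2:ℕ)^a = 2^d := by omega
      exact Or.inr ⟨by rw [pow2_eq had], rfl⟩
    · have hac : (2:ℕ)^a = 2^c := by omega
      exact Or.inl ⟨by rw [pow2_eq hac], rfl⟩
    · exfalso
      have := @Nat.one_le_two_pow a; have := @Nat.one_le_two_pow c
      have := @Nat.one_le_two_pow d; omega
    · exfalso
      have := @Nat.one_le_two_pow a; have := @Nat.one_le_two_pow b; omega
    · exfalso
      have := @Nat.one_le_two_pow a; have := @Nat.one_le_two_pow b
      have := @Nat.one_le_two_pow d; omega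
    · exfalso
      have := @Nat.one_le_two_pow a; have := @Nat.one_le_two_pow b
      have := @Nat.one_le_two_pow c; omega
    · have h' : 2^a + 2^b = 2^c + 2^d := by omega
      rcases IH b c d h' with ⟨h1, h2⟩ | ⟨h1, h2⟩
      · exact Or.inl ⟨by rw [h1], by rw [h2]⟩
      · exact Or.inr ⟨by rw [h1], by rw [h2]⟩

/-- If an edge label is a singleton, both endpoint labels are singletons. -/
private lemma singleton_of_mem_mono (fA : V → Finset ℕ) (hne : ∀ v, (fA v).Nonempty)
    (s : Sym2 V) (hs : (edgeLabel fA s).card = 1) : ∀ a ∈ s, (fA a).card = 1 := by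
  induction s using Sym2.ind with
  | _ p q =>
    intro a ha
    rw [Sym2.mem_iff] at ha
    have hL : (fA p + fA q).card = 1 := by
      simpa only [edgeLabel, Sym2.lift_mk] using hs
    have h1 : (fA p).card ≤ (fA p + fA q).card := Finset.card_le_card_add_right (hne q)
    have h2 : (fA q).card ≤ (fA p + fA q).card := Finset.card_le_card_add_left (hne p)
    have hp := Finset.card_pos.mpr (hne p)
    have hq := Finset.card_pos.mpr (hne q)
    rcases ha with rfl | rfl <;> omega

/-- In a weak IASI situation, every edge has a singleton endpoint. -/
private lemma min_card_eq_one {A B : Finset ℕ} (hA : A.Nonempty) (hB : B.Nonempty)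
    (h : (A + B).card = max A.card B.card) : A.card = 1 ∨ B.card = 1 := by
  have hge := cauchy_davenport_add_of_linearOrder_isCancelAdd hA hB
  have := Finset.card_pos.mpr hA
  have := Finset.card_pos.mpr hB
  omega

/-- Universal construction: for a countable vertex type and any prescribed positive
cardinalities, there is a labeling by intervals starting at distinct powers of two. -/
private lemma exists_good_labeling (W : Type*) [Countable W] (n : W → ℕ)
    (hn : ∀ w, 1 ≤ n w) :
    ∃ F : W → Finset ℕ, (∀ w, (F w).Nonempty) ∧ (∀ w, (F w).card = n w) ∧
      Function.Injective F ∧ Function.Injective (edgeLabel F) ∧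
      (∀ u v, (F u + F v).card = n u + n v - 1) := by
  obtain ⟨ι, hι⟩ := Countable.exists_injective_nat W
  set F : W → Finset ℕ := fun w => Finset.Icc (2 ^ ι w) (2 ^ ι w + (n w - 1)) with hF
  have hmem : ∀ w, 2 ^ ι w ∈ F w := fun w =>
    Finset.mem_Icc.mpr ⟨le_refl _, Nat.le_add_right _ _⟩
  have hlowF : ∀ w, ∀ x ∈ F w, 2 ^ ι w ≤ x := fun w x hx => (Finset.mem_Icc.mp hx).1
  have hne : ∀ w, (F w).Nonempty := fun w => ⟨2 ^ ι w, hmem w⟩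
  have hcard : ∀ w, (F w).card = n w := by
    intro w
    have := hn w
    rw [hF]
    simp only [Nat.card_Icc]
    omega
  have hsumlow : ∀ u v : W, ∀ x ∈ F u + F v, 2 ^ ι u + 2 ^ ι v ≤ x := by
    intro u v x hx
    obtain ⟨a, ha, b, hb, rfl⟩ := Finset.mem_add.mp hx
    exact Nat.add_le_add (hlowF u a ha) (hlowF v b hb)
  have hsummem : ∀ u v : W, 2 ^ ι u + 2 ^ ι v ∈ F u + F v := fun u v =>
    Finset.add_mem_add (hmem u) (hmem v)
  refine ⟨F, hne, hcard, ?_, ?_, ?_⟩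
  · intro w w' h
    have h1 : 2 ^ ι w ∈ F w' := h ▸ hmem w
    have h2 : 2 ^ ι w' ∈ F w := h ▸ hmem w'
    exact hι (pow2_eq (le_antisymm (hlowF w _ h2) (hlowF w' _ h1)))
  · intro e e'
    induction e, e' using Sym2.inductionOn₂ with
    | _ u v u' v' =>
      intro h
      simp only [edgeLabel, Sym2.lift_mk] at h
      have m1 : 2 ^ ι u + 2 ^ ι v ∈ F u' + F v' := h ▸ hsummem u v
      have m2 : 2 ^ ι u' + 2 ^ ι v' ∈ F u + F v := h.symm ▸ hsummem u' v'
      have le1 := hsumlow u' v' _ m1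
      have le2 := hsumlow u v _ m2
      have heq : 2 ^ ι u + 2 ^ ι v = 2 ^ ι u' + 2 ^ ι v' := le_antisymm le2 le1
      rcases two_pow_add_eq _ _ _ _ heq with ⟨h1, h2⟩ | ⟨h1, h2⟩
      · rw [Sym2.eq_iff]
        exact Or.inl ⟨hι h1, hι h2⟩
      · rw [Sym2.eq_iff]
        exact Or.inr ⟨hι h1, hι h2⟩
  · intro u v
    have hsub := Finset.Icc_add_Icc_subset (2 ^ ι u) (2 ^ ι u + (n u - 1))
      (2 ^ ι v) (2 ^ ι v + (n v - 1))
    have hle : (F u + F v).card ≤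
        (Finset.Icc (2 ^ ι u + 2 ^ ι v)
          ((2 ^ ι u + (n u - 1)) + (2 ^ ι v + (n v - 1)))).card :=
      Finset.card_le_card hsub
    rw [Nat.card_Icc] at hle
    have hge := cauchy_davenport_add_of_linearOrder_isCancelAdd (hne u) (hne v)
    rw [hcard u, hcard v] at hge
    have := hn u
    have := hn v
    have : 1 ≤ 2 ^ ι u := Nat.one_le_two_pow
    have : 1 ≤ 2 ^ ι v := Nat.one_le_two_pow
    omega

/-- Given weak IASIs `f₁` of `G₁` and `f₂` of `G₂`, the edge corona
`G₁ ⋄ G₂` admits a weak IASI `f` preserving the cardinalities of the labels of `G₁`,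
making the copies of `G₂` over non-mono-indexed edges of `G₁` 1-uniform, and preserving
the label cardinalities of `G₂` on the copies over mono-indexed edges of `G₁`. -/
theorem edgeCorona_weakIASI_exists {V₁ V₂ : Type*} [Fintype V₁] [Fintype V₂]
    (G₁ : SimpleGraph V₁) (G₂ : SimpleGraph V₂)
    (h₁ : ∀ v : V₁, ∃ w, G₁.Adj v w) (h₂ : ∀ v : V₂, ∃ w, G₂.Adj v w)
    (f₁ : V₁ → Finset ℕ) (f₂ : V₂ → Finset ℕ)
    (hf₁ : IsWeakIASI G₁ f₁) (hf₂ : IsWeakIASI G₂ f₂) :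
    ∃ f : V₁ ⊕ (G₁.edgeSet × V₂) → Finset ℕ,
      IsWeakIASI (edgeCorona G₁ G₂) f ∧
      (∀ v : V₁, (f (Sum.inl v)).card = (f₁ v).card) ∧
      (∀ e : G₁.edgeSet, (edgeLabel f₁ (e : Sym2 V₁)).card ≠ 1 →
        ∀ x : V₂, (f (Sum.inr (e, x))).card = 1) ∧
      (∀ e : G₁.edgeSet, (edgeLabel f₁ (e : Sym2 V₁)).card = 1 →
        ∀ x : V₂, (f (Sum.inr (e, x))).card = (f₂ x).card) := by
  classical
  set n : V₁ ⊕ (G₁.edgeSet × V₂) → ℕ :=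
    Sum.elim (fun v => (f₁ v).card)
      (fun ex => if (edgeLabel f₁ (ex.1 : Sym2 V₁)).card = 1 then (f₂ ex.2).card else 1)
    with hn
  have hn1 : ∀ w, 1 ≤ n w := by
    rintro (v | ⟨e, x⟩)
    · exact Finset.card_pos.mpr (hf₁.1.1 v)
    · simp only [hn, Sum.elim_inr]
      split
      · exact Finset.card_pos.mpr (hf₂.1.1 x)
      · exact le_refl 1
  obtain ⟨F, hFne, hFcard, hFinj, hELinj, hFsum⟩ :=
    exists_good_labeling (V₁ ⊕ (G₁.edgeSet × V₂)) n hn1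
  refine ⟨F, ⟨⟨hFne, hFinj, fun e _ e' _ h => hELinj h⟩, ?_⟩, ?_, ?_, ?_⟩
  · -- weak condition on every edge of the corona
    intro u v hadj
    have key : n u = 1 ∨ n v = 1 := by
      rcases u with a | ⟨e, x⟩ <;> rcases v with b | ⟨e', y⟩
      · have hab : G₁.Adj a b := hadj
        simp only [hn, Sum.elim_inl]
        exact min_card_eq_one (hf₁.1.1 a) (hf₁.1.1 b) (hf₁.2 hab)
      · have hmem : a ∈ (e'.1 : Sym2 V₁) := hadj
        simp only [hn, Sum.elim_inl, Sum.elim_inr]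
        by_cases hm : (edgeLabel f₁ (e'.1 : Sym2 V₁)).card = 1
        · exact Or.inl (singleton_of_mem_mono f₁ hf₁.1.1 _ hm a hmem)
        · rw [if_neg hm]; exact Or.inr rfl
      · have hmem : b ∈ (e.1 : Sym2 V₁) := hadj
        simp only [hn, Sum.elim_inl, Sum.elim_inr]
        by_cases hm : (edgeLabel f₁ (e.1 : Sym2 V₁)).card = 1
        · exact Or.inr (singleton_of_mem_mono f₁ hf₁.1.1 _ hm b hmem)
        · rw [if_neg hm]; exact Or.inl rfl
      · have h' : e = e' ∧ G₂.Adj x y := hadj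
        obtain ⟨rfl, hxy⟩ := h'
        simp only [hn, Sum.elim_inr]
        by_cases hm : (edgeLabel f₁ (e.1 : Sym2 V₁)).card = 1
        · rw [if_pos hm, if_pos hm]
          exact min_card_eq_one (hf₂.1.1 x) (hf₂.1.1 y) (hf₂.2 hxy)
        · rw [if_neg hm]; exact Or.inl rfl
    rw [hFcard u, hFcard v, hFsum u v]
    have := hn1 u
    have := hn1 v
    omega
  · intro v
    rw [hFcard]
    simp only [hn, Sum.elim_inl]
  · intro e hmono x
    rw [hFcard]
    simp only [hn, Sum.elim_inr]
    rw [if_neg hmono]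
  · intro e hmono x
    rw [hFcard]
    simp only [hn, Sum.elim_inr]
    rw [if_pos hmono]

end IASIPaper
end
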